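/- For every connected graph G on n vertices, the path eccentricity of G is at most (n-1)/3. -/
import Mathlib


open SimpleGraph

variable {V : Type*} [Fintype V] [DecidableEq V]

/-- Distance from a vertex `u` to the vertex set of a walk `P`. -/
noncomputable def walkDist (G : SimpleGraph V) {a b : V} (P : G.Walk a b) (u : V) : ℕ :=
  P.support.toFinset.inf' ⟨a, List.mem_toFinset.mpr P.start_mem_support⟩ (fun x => G.dist u x)

/-- Eccentricity of a walk: max distance from any vertex of `G` to the walk. -/
noncomputable def eccW (G : SimpleGraph V) {a b : V} (P : G.Walk a b) : ℕ :=
  Finset.univ.sup (walkDist G P)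

/-- Path eccentricity of a graph. -/
noncomputable def pe (G : SimpleGraph V) : ℕ :=
  sInf {m | ∃ (a b : V) (P : G.Walk a b), P.IsPath ∧ eccW G P = m}

/-- `P` is a longest path in `G`. -/
def IsLongestPath (G : SimpleGraph V) {a b : V} (P : G.Walk a b) : Prop :=
  P.IsPath ∧ ∀ (c d : V) (Q : G.Walk c d), Q.IsPath → Q.length ≤ P.length

/-- `G` is `k`-connected. -/
def KConnected (k : ℕ) (G : SimpleGraph V) : Prop :=
  k + 1 ≤ Fintype.card V ∧
    ∀ S : Finset V, S.card < k → (G.induce ((↑S : Set V)ᶜ)).Connected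

lemma aux_append_isPath {G : SimpleGraph V} {u v w : V} {p : G.Walk u v} {q : G.Walk v w}
    (hp : p.IsPath) (hq : q.IsPath)
    (h : ∀ x, x ∈ p.support → x ∈ q.support → x = v) : (p.append q).IsPath := by
  rw [Walk.isPath_def, Walk.support_append]
  refine List.Nodup.append hp.support_nodup ?_ ?_
  · have := hq.support_nodup
    rw [q.support_eq_cons] at this
    exact this.of_cons
  · intro x hx hx'
    have hxv : x = v := h x hx (List.mem_of_mem_tail hx')
    subst hxv
    have := hq.support_nodup
    rw [q.support_eq_cons] at this
    exact (List.nodup_cons.mp this).1 hx'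

lemma aux_key {G : SimpleGraph V} (hG : G.Connected) {a b : V} (P : G.Walk a b)
    (hP : IsLongestPath G P) (u : V) : 3 * walkDist G P u + 1 ≤ Fintype.card V := by
  classical
  set d := walkDist G P u with hd
  -- find the closest vertex v on P
  obtain ⟨v, hvmem, hvd⟩ := Finset.exists_mem_eq_inf'
    (⟨a, List.mem_toFinset.mpr P.start_mem_support⟩ : P.support.toFinset.Nonempty)
    (fun x => G.dist u x)
  have hv : v ∈ P.support := List.mem_toFinset.mp hvmem
  have hduv : G.dist u v = d := hvd.symm
  have hmin : ∀ x ∈ P.support, d ≤ G.dist u x := by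
    intro x hx
    exact Finset.inf'_le _ (List.mem_toFinset.mpr hx)
  -- a shortest path Q from u to v
  obtain ⟨W, hW⟩ := (hG u v).exists_walk_length_eq_dist
  set Q : G.Walk u v := W.bypass with hQdef
  have hQpath : Q.IsPath := W.bypass_isPath
  have hQlen : Q.length = d := by
    have h1 : Q.length ≤ W.length := W.length_bypass_le
    have h2 : G.dist u v ≤ Q.length := SimpleGraph.dist_le Q
    omega
  -- every vertex of Q on P equals v
  have hQP : ∀ x, x ∈ Q.support → x ∈ P.support → x = v := by
    intro x hxQ hxP
    have h1 : d ≤ G.dist u x := hmin x hxP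
    have h2 : G.dist u x ≤ (Q.takeUntil x hxQ).length := SimpleGraph.dist_le _
    have h3 : (Q.takeUntil x hxQ).length + (Q.dropUntil x hxQ).length = d := by
      have := congrArg Walk.length (Q.take_spec hxQ)
      rw [Walk.length_append] at this
      omega
    have h4 : (Q.dropUntil x hxQ).length = 0 := by omega
    exact Walk.eq_of_length_eq_zero h4
  -- split P at v
  set T := P.takeUntil v hv with hT
  set D := P.dropUntil v hv with hD
  have hTD : T.length + D.length = P.length := by
    have := congrArg Walk.length (P.take_spec hv)
    rw [Walk.length_append, ← hT, ← hD] at this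
    omega
  have hTpath : T.IsPath := hP.1.takeUntil hv
  have hDpath : D.IsPath := hP.1.dropUntil hv
  -- path a → v → u
  have hA : (T.append Q.reverse).IsPath := by
    refine aux_append_isPath hTpath hQpath.reverse ?_
    intro x hx hx'
    exact hQP x (by simpa using hx') (P.support_takeUntil_subset hv hx)
  have hAle : T.length + d ≤ P.length := by
    have := hP.2 _ _ _ hA
    rw [Walk.length_append, Walk.length_reverse, hQlen] at this
    exact this
  -- path u → v → b
  have hB : (Q.append D).IsPath := by
    refine aux_append_isPath hQpath hDpath ?_
    intro x hx hx'
    exact hQP x hx (P.support_dropUntil_subset hv hx')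
  have hBle : d + D.length ≤ P.length := by
    have := hP.2 _ _ _ hB
    rw [Walk.length_append, hQlen] at this
    exact this
  have hL2d : 2 * d ≤ P.length := by omega
  -- counting vertices
  have hcard : P.length + d + 2 ≤ Fintype.card V + 1 := by
    have h1 : P.support.toFinset.card = P.length + 1 := by
      rw [List.toFinset_card_of_nodup hP.1.support_nodup, Walk.length_support]
    have h2 : Q.support.toFinset.card = d + 1 := by
      rw [List.toFinset_card_of_nodup hQpath.support_nodup, Walk.length_support, hQlen]
    have h3 : (P.support.toFinset ∩ Q.support.toFinset).card ≤ 1 := by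
      refine Finset.card_le_one.mpr ?_
      intro x hx y hy
      simp only [Finset.mem_inter, List.mem_toFinset] at hx hy
      rw [hQP x hx.2 hx.1, hQP y hy.2 hy.1]
    have h4 : (P.support.toFinset ∪ Q.support.toFinset).card ≤ Fintype.card V :=
      Finset.card_le_univ _
    have h5 := Finset.card_union_add_card_inter P.support.toFinset Q.support.toFinset
    omega
  omega

theorem stmt1 (G : SimpleGraph V) (hG : G.Connected) :
    (pe G : ℝ) ≤ ((Fintype.card V : ℝ) - 1) / 3 := by
  classical
  haveI hne : Nonempty V := hG.nonempty
  obtain ⟨a⟩ := id hne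
  -- the set of path lengths
  set S : Set ℕ := {L | ∃ (c d : V) (Q : G.Walk c d), Q.IsPath ∧ Q.length = L} with hS
  have hS0 : 0 ∈ S := ⟨a, a, Walk.nil, Walk.IsPath.nil, rfl⟩
  have hSbdd : ∀ L ∈ S, L ≤ Fintype.card V := by
    rintro L ⟨c, d, Q, hQ, rfl⟩
    exact hQ.length_lt.le
  have hSmem : sSup S ∈ S := by
    apply Nat.sSup_mem ⟨0, hS0⟩
    exact ⟨Fintype.card V, fun L hL => hSbdd L hL⟩
  obtain ⟨c, d, P, hPpath, hPlen⟩ := hSmem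
  have hPlong : IsLongestPath G P := by
    refine ⟨hPpath, fun c' d' Q hQ => ?_⟩
    rw [hPlen]
    exact le_csSup ⟨Fintype.card V, fun L hL => hSbdd L hL⟩ ⟨c', d', Q, hQ, rfl⟩
  have hpe : pe G ≤ eccW G P := Nat.sInf_le ⟨c, d, P, hPpath, rfl⟩
  -- bound eccW
  obtain ⟨u, -, hu⟩ := Finset.exists_mem_eq_sup (Finset.univ : Finset V)
    Finset.univ_nonempty (walkDist G P)
  have hkey : 3 * eccW G P + 1 ≤ Fintype.card V := by
    rw [eccW, hu]
    exact aux_key hG P hPlong u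
  have h1 : (pe G : ℝ) ≤ (eccW G P : ℝ) := by exact_mod_cast hpe
  have h2 : (3 : ℝ) * (eccW G P : ℝ) + 1 ≤ (Fintype.card V : ℝ) := by exact_mod_cast hkey
  rw [le_div_iff₀ (by norm_num : (0:ℝ) < 3)]
  linarith
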